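/- Let m ≥ 1 be an integer, β ∈ ℝ, and let Q : (0,∞) → B(L²(ℝⁿ)) be a family of bounded linear operators such that (t Q_t)_{t>0} satisfies off-diagonal estimates of order M > 0 with homogeneity m and constant C₀. Then there exists C > 0 (depending only on n, m, M, β, C₀) such that for every compactly supported continuous f : (0,∞) × ℝⁿ → ℂ, every x ∈ ℝⁿ, every integer j ≥ 0 and every integer k ≥ 1: ∫₀^∞ ∫_{B(x, t^{1/m})} | ∫_{2^{−k−1}t}^{2^{−k}t} Q_{t−s}(1_{C_j(x, 4t^{1/m})} f(s,·))(y) ds |² t^{β − n/m} dy dt ≤ C · 2^{−k(n/m + 1 − β)} · 2^{−2jmM} ∫₀^∞ ‖1_{B(x, 2^{j + k/m + 3} s^{1/m})} f(s,·)‖²_{L²(ℝⁿ)} s^{β − n/m} ds. -/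

import Mathlib

open MeasureTheory Metric Set
open scoped ENNReal NNReal

noncomputable section

attribute [local instance] Classical.propDecidable

abbrev Rn (n : ℕ) := EuclideanSpace ℝ (Fin n)
abbrev L2 (n : ℕ) : Type := Lp ℂ 2 (volume : Measure (Rn n))

/-- The element of `L²(ℝⁿ)` represented by a function (zero if not in `L²`). -/
def toL2 {n : ℕ} (g : Rn n → ℂ) : L2 n :=
  if h : MemLp g 2 (volume : Measure (Rn n)) then h.toLp g else 0

/-- Multiplication of an `L²` function by the indicator function `1_E`. -/
def indL2 {n : ℕ} (E : Set (Rn n)) (u : L2 n) : L2 n :=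
  if hE : MeasurableSet E then MemLp.toLp (E.indicator u) ((Lp.memLp u).indicator hE) else 0

/-- `f` is a compactly supported continuous function on `(0,∞) × ℝⁿ`. -/
def CcOnPos (n : ℕ) (f : ℝ → Rn n → ℂ) : Prop :=
  Continuous (Function.uncurry f) ∧ HasCompactSupport (Function.uncurry f) ∧
    tsupport (Function.uncurry f) ⊆ Ioi (0:ℝ) ×ˢ (univ : Set (Rn n))

/-- Distance between two sets in `ℝⁿ`. -/
def setDist {n : ℕ} (E F : Set (Rn n)) : ℝ := sInf (Set.image2 dist E F)

/-- The family `(T_t)_{t>0}` satisfies (Gaffney-Davies) off-diagonal estimates of order `M`,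
with homogeneity `m` and constant `C₀`. -/
def OffDiag (n : ℕ) (T : ℝ → (L2 n →L[ℂ] L2 n)) (M : ℝ) (m : ℕ) (C₀ : ℝ) : Prop :=
  ∀ E F : Set (Rn n), MeasurableSet E → MeasurableSet F → ∀ t : ℝ, 0 < t → ∀ u : L2 n,
    ‖indL2 E (T t (indL2 F u))‖ ≤ C₀ * (1 + setDist E F ^ (m:ℝ) / t) ^ (-M) * ‖indL2 F u‖

/-- The annuli `C_0(x,r) = B(x,r)`, `C_j(x,r) = B(x,2ʲr) \\ B(x,2^{j-1}r)` for `j ≥ 1`. -/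
def Cann {n : ℕ} (j : ℕ) (x : Rn n) (r : ℝ) : Set (Rn n) :=
  if j = 0 then ball x r else ball x (2^j * r) \ ball x (2^(j-1) * r)

/-!
For `s` in the window `(2^{-k-1} t, 2^{-k} t)` we have `t - s ≥ t / 2`, and for `j ≥ 1` the ball
`B(x, t^{1/m})` lies at distance `≥ 2^j t^{1/m}` from the annulus `C_j(x, 4 t^{1/m})`. So the
off-diagonal estimate for `(t - s) Q_{t-s}` bounds each integrand by `2^{-jmM} / t` times the `L²`
norm of `f(s)` on the ball `B(x, 2^{j+k/m+3} s^{1/m})`, which contains the annulus. Minkowski's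
inequality and Cauchy–Schwarz over the window cost its length `2^{-k-1} t`. After exchanging the
`t`- and `s`-integrals, `t` runs over `(2^k s, 2^{k+1} s)`, where `t^{β - n/m - 1} dt` has mass
`≲ 2^{k(β - n/m)} s^{β - n/m}`; with the factor `2^{-k}` this gives `2^{-k(n/m + 1 - β)}`.
-/

lemma ContinuousLinearMap.enorm_apply_integral_le {α 𝕜 E F : Type*} [MeasurableSpace α]
    {μ : Measure α} [RCLike 𝕜] [NormedAddCommGroup E] [NormedSpace 𝕜 E] [NormedSpace ℝ E]
    [CompleteSpace E] [NormedAddCommGroup F] [NormedSpace 𝕜 F] [NormedSpace ℝ F] [CompleteSpace F]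
    (L : E →L[𝕜] F) (G : α → E) : ‖L (∫ a, G a ∂μ)‖ₑ ≤ ∫⁻ a, ‖L (G a)‖ₑ ∂μ := by
  by_cases hG : Integrable G μ
  · rw [← L.integral_comp_comm hG]
    exact enorm_integral_le_lintegral_enorm _
  · simp [integral_undef hG]

lemma sq_lintegral_le_measure_univ_mul {α : Type*} [MeasurableSpace α] {μ : Measure α}
    {g : α → ℝ≥0∞} (hg : AEMeasurable g μ) : (∫⁻ a, g a ∂μ) ^ 2 ≤ μ univ * ∫⁻ a, g a ^ 2 ∂μ := by
  have h := ENNReal.lintegral_mul_le_Lp_mul_Lq μ Real.HolderConjugate.two_two hg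
    (aemeasurable_const (b := (1 : ℝ≥0∞)))
  simp only [Pi.mul_apply, mul_one, ENNReal.rpow_two, one_pow, lintegral_const, one_mul] at h
  calc (∫⁻ a, g a ∂μ) ^ 2 ≤ ((∫⁻ a, g a ^ 2 ∂μ) ^ (1 / 2 : ℝ) * μ univ ^ (1 / 2 : ℝ)) ^ 2 := by
        gcongr
    _ = μ univ * ∫⁻ a, g a ^ 2 ∂μ := by
        rw [mul_pow, ← ENNReal.rpow_natCast, ← ENNReal.rpow_natCast, ← ENNReal.rpow_mul,
          ← ENNReal.rpow_mul]
        norm_num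
        ring

lemma ContinuousLinearMap.sq_enorm_apply_integral_le {α 𝕜 E F : Type*} [MeasurableSpace α]
    {μ : Measure α} [RCLike 𝕜] [NormedAddCommGroup E] [NormedSpace 𝕜 E] [NormedSpace ℝ E]
    [CompleteSpace E] [NormedAddCommGroup F] [NormedSpace 𝕜 F] [NormedSpace ℝ F] [CompleteSpace F]
    (L : E →L[𝕜] F) {G : α → E} {g : α → ℝ≥0∞} (hg : AEMeasurable g μ) {c : ℝ≥0∞}
    (hG : ∀ᵐ a ∂μ, ‖L (G a)‖ₑ ≤ c * g a) :
    ‖L (∫ a, G a ∂μ)‖ₑ ^ 2 ≤ c ^ 2 * μ univ * ∫⁻ a, g a ^ 2 ∂μ := by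
  calc ‖L (∫ a, G a ∂μ)‖ₑ ^ 2 ≤ (∫⁻ a, c * g a ∂μ) ^ 2 :=
        pow_le_pow_left' ((L.enorm_apply_integral_le G).trans (lintegral_mono_ae hG)) 2
    _ = c ^ 2 * (∫⁻ a, g a ∂μ) ^ 2 := by rw [lintegral_const_mul'' c hg, mul_pow]
    _ ≤ c ^ 2 * (μ univ * ∫⁻ a, g a ^ 2 ∂μ) := by gcongr; exact sq_lintegral_le_measure_univ_mul hg
    _ = c ^ 2 * μ univ * ∫⁻ a, g a ^ 2 ∂μ := (mul_assoc _ _ _).symm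

lemma Real.rpow_le_rpow_add_rpow_of_mem_Icc {p q t : ℝ} (e : ℝ) (hp : 0 < p) (ht : t ∈ Icc p q) :
    t ^ e ≤ p ^ e + q ^ e := by
  have hq : 0 < q := hp.trans_le (ht.1.trans ht.2)
  rcases le_total 0 e with he | he
  · linarith [Real.rpow_le_rpow (hp.le.trans ht.1) ht.2 he, Real.rpow_nonneg hp.le e]
  · linarith [Real.rpow_le_rpow_of_nonpos hp ht.1 he, Real.rpow_nonneg hq.le e]

lemma setLIntegral_Ioo_rpow_le {p q : ℝ} (e : ℝ) (hp : 0 < p) (hpq : p ≤ q) :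
    ∫⁻ t in Ioo p q, ENNReal.ofReal (t ^ e) ≤ ENNReal.ofReal ((p ^ e + q ^ e) * (q - p)) := by
  calc ∫⁻ t in Ioo p q, ENNReal.ofReal (t ^ e)
        ≤ ∫⁻ _ in Ioo p q, ENNReal.ofReal (p ^ e + q ^ e) :=
        setLIntegral_mono' measurableSet_Ioo fun t ht => ENNReal.ofReal_le_ofReal
          (Real.rpow_le_rpow_add_rpow_of_mem_Icc e hp (Ioo_subset_Icc_self ht))
    _ = _ := by
        rw [setLIntegral_const, Real.volume_Ioo, ← ENNReal.ofReal_mul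
          (add_nonneg (Real.rpow_nonneg hp.le e) (Real.rpow_nonneg (hp.le.trans hpq) e))]

lemma setLIntegral_Ioo_inv_mul_rpow_le {a b s : ℝ} (w : ℝ) (ha : 0 < a) (hab : a ≤ b)
    (hs : 0 < s) :
    ∫⁻ t in Ioo (b⁻¹ * s) (a⁻¹ * s), ENNReal.ofReal (t ^ (w - 1))
      ≤ ENNReal.ofReal ((b⁻¹ ^ (w - 1) + a⁻¹ ^ (w - 1)) * (a⁻¹ - b⁻¹) * s ^ w) := by
  have hb : 0 < b := ha.trans_le hab
  refine (setLIntegral_Ioo_rpow_le _ (by positivity) (by gcongr)).trans_eq ?_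
  rw [Real.mul_rpow (by positivity) hs.le, Real.mul_rpow (by positivity) hs.le,
    Real.rpow_sub_one hs.ne']
  congr 1
  field_simp

lemma lintegral_Ioi_lintegral_Ioo_mul_rpow_le {a b : ℝ} (w : ℝ) (ha : 0 < a) (hab : a ≤ b)
    {H : ℝ → ℝ≥0∞} (hH : Measurable H) :
    ∫⁻ t in Ioi 0, (∫⁻ s in Ioo (a * t) (b * t), H s) * ENNReal.ofReal (t ^ (w - 1))
      ≤ ENNReal.ofReal ((b⁻¹ ^ (w - 1) + a⁻¹ ^ (w - 1)) * (a⁻¹ - b⁻¹))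
        * ∫⁻ s in Ioi 0, H s * ENNReal.ofReal (s ^ w) := by
  have hb : 0 < b := ha.trans_le hab
  set B := (b⁻¹ ^ (w - 1) + a⁻¹ ^ (w - 1)) * (a⁻¹ - b⁻¹)
  have hB : 0 ≤ B := mul_nonneg (by positivity) (sub_nonneg.2 (inv_anti₀ ha hab))
  set S := {p : ℝ × ℝ | a * p.1 < p.2 ∧ p.2 < b * p.1}
  have hS : MeasurableSet S :=
    (measurableSet_lt (measurable_fst.const_mul a) measurable_snd).inter
      (measurableSet_lt measurable_snd (measurable_fst.const_mul b))
  set F : ℝ → ℝ → ℝ≥0∞ := fun t s =>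
    S.indicator (fun p => H p.2 * ENNReal.ofReal (p.1 ^ (w - 1))) (t, s)
  have hF : Measurable (Function.uncurry F) :=
    ((hH.comp measurable_snd).mul (measurable_fst.pow_const _).ennreal_ofReal).indicator hS
  have hinner : ∀ t ∈ Ioi (0:ℝ), (∫⁻ s in Ioo (a * t) (b * t), H s)
      * ENNReal.ofReal (t ^ (w - 1)) = ∫⁻ s in Ioi 0, F t s := by
    intro t ht
    have hsub : Ioo (a * t) (b * t) ⊆ Ioi 0 := fun s hs => (mul_pos ha ht).trans hs.1
    change _ = ∫⁻ s in Ioi 0, (Ioo (a * t) (b * t)).indicator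
      (fun s => H s * ENNReal.ofReal (t ^ (w - 1))) s
    rw [lintegral_indicator measurableSet_Ioo, Measure.restrict_restrict measurableSet_Ioo,
      inter_eq_self_of_subset_left hsub, lintegral_mul_const' _ _ ENNReal.ofReal_ne_top]
  have houter : ∀ s ∈ Ioi (0:ℝ),
      ∫⁻ t in Ioi 0, F t s ≤ ENNReal.ofReal B * (H s * ENNReal.ofReal (s ^ w)) := by
    intro s (hs : 0 < s)
    have hsub : Ioo (b⁻¹ * s) (a⁻¹ * s) ⊆ Ioi 0 := fun t ht =>
      (mul_pos (inv_pos.2 hb) hs).trans ht.1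
    have hFs : (fun t => F t s) = (Ioo (b⁻¹ * s) (a⁻¹ * s)).indicator
        (fun t => H s * ENNReal.ofReal (t ^ (w - 1))) := by
      ext t
      simp only [F, S, indicator, mem_ofPred_eq, mem_Ioo]
      exact if_congr (by rw [inv_mul_lt_iff₀ hb, lt_inv_mul_iff₀ ha, and_comm]) rfl rfl
    rw [hFs, lintegral_indicator measurableSet_Ioo, Measure.restrict_restrict measurableSet_Ioo,
      inter_eq_self_of_subset_left hsub, lintegral_const_mul _ (by fun_prop)]
    calc H s * ∫⁻ t in Ioo (b⁻¹ * s) (a⁻¹ * s), ENNReal.ofReal (t ^ (w - 1))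
        ≤ H s * ENNReal.ofReal (B * s ^ w) := by
          gcongr
          exact setLIntegral_Ioo_inv_mul_rpow_le w ha hab hs
      _ = ENNReal.ofReal B * (H s * ENNReal.ofReal (s ^ w)) := by
          rw [ENNReal.ofReal_mul hB]
          ring
  calc ∫⁻ t in Ioi 0, (∫⁻ s in Ioo (a * t) (b * t), H s) * ENNReal.ofReal (t ^ (w - 1))
        = ∫⁻ t in Ioi 0, ∫⁻ s in Ioi 0, F t s := setLIntegral_congr_fun measurableSet_Ioi hinner
    _ = ∫⁻ s in Ioi 0, ∫⁻ t in Ioi 0, F t s := lintegral_lintegral_swap hF.aemeasurable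
    _ ≤ ∫⁻ s in Ioi 0, ENNReal.ofReal B * (H s * ENNReal.ofReal (s ^ w)) :=
        setLIntegral_mono' measurableSet_Ioi houter
    _ = _ := lintegral_const_mul' _ _ ENNReal.ofReal_ne_top

section

variable {n : ℕ}

lemma coeFn_indL2 {E : Set (Rn n)} (hE : MeasurableSet E) (u : L2 n) :
    indL2 E u =ᵐ[volume] E.indicator u := by
  rw [indL2, dif_pos hE]
  exact MemLp.coeFn_toLp _

lemma indL2_of_not_measurableSet {E : Set (Rn n)} (hE : ¬MeasurableSet E) (u : L2 n) :
    indL2 E u = 0 := by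
  rw [indL2, dif_neg hE]

lemma enorm_indL2_sq {E : Set (Rn n)} (hE : MeasurableSet E) (u : L2 n) :
    ‖indL2 E u‖ₑ ^ 2 = ∫⁻ y in E, ‖u y‖ₑ ^ 2 := by
  have h := eLpNorm_nnreal_pow_eq_lintegral (μ := volume) (f := E.indicator u) (p := 2)
    two_ne_zero
  rw [Lp.enorm_def, eLpNorm_congr_ae (coeFn_indL2 hE u)]
  simp only [ENNReal.coe_ofNat, NNReal.coe_ofNat, ENNReal.rpow_ofNat] at h
  rw [h, ← lintegral_indicator hE]
  congr 1
  ext y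
  by_cases hy : y ∈ E <;> simp [hy]

lemma norm_indL2_le_of_subset {E F : Set (Rn n)} (hE : MeasurableSet E) (hF : MeasurableSet F)
    (hEF : E ⊆ F) (u : L2 n) : ‖indL2 E u‖ ≤ ‖indL2 F u‖ := by
  have h : ‖indL2 E u‖ₑ ^ 2 ≤ ‖indL2 F u‖ₑ ^ 2 := by
    rw [enorm_indL2_sq hE, enorm_indL2_sq hF]
    exact lintegral_mono_set hEF
  rw [← ofReal_norm, ← ofReal_norm, ← ENNReal.ofReal_pow (norm_nonneg _),
    ← ENNReal.ofReal_pow (norm_nonneg _)] at h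
  exact le_of_sq_le_sq ((ENNReal.ofReal_le_ofReal_iff (by positivity)).1 h) (norm_nonneg _)

lemma indL2_empty (u : L2 n) : indL2 ∅ u = 0 := by
  simp only [indL2, MeasurableSet.empty, dif_pos, indicator_empty]
  exact MemLp.toLp_zero _

lemma indL2_univ (u : L2 n) : indL2 univ u = u := by
  simp [indL2]

lemma norm_indL2_le (E : Set (Rn n)) (u : L2 n) : ‖indL2 E u‖ ≤ ‖u‖ := by
  by_cases hE : MeasurableSet E
  · simpa [indL2_univ] using norm_indL2_le_of_subset hE MeasurableSet.univ (subset_univ E) u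
  · rw [indL2_of_not_measurableSet hE, norm_zero]
    exact norm_nonneg u

def indL2CLM (E : Set (Rn n)) (hE : MeasurableSet E) : L2 n →L[ℂ] L2 n :=
  LinearMap.mkContinuous
    { toFun := indL2 E
      map_add' := fun u v => by
        simp only [indL2, dif_pos hE, ← MemLp.toLp_add]
        refine MemLp.toLp_congr _ _ ?_
        filter_upwards [Lp.coeFn_add u v] with y hy
        simp only [Pi.add_apply, indicator_apply, hy]
        split_ifs <;> simp
      map_smul' := fun c u => by
        simp only [indL2, dif_pos hE, RingHom.id_apply, ← MemLp.toLp_const_smul]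
        refine MemLp.toLp_congr _ _ ?_
        filter_upwards [Lp.coeFn_smul c u] with y hy
        simp only [Pi.smul_apply, indicator_apply, hy]
        split_ifs <;> simp }
    1 fun u => by simpa using norm_indL2_le E u

lemma indL2CLM_apply {E : Set (Rn n)} (hE : MeasurableSet E) (u : L2 n) :
    indL2CLM E hE u = indL2 E u := rfl

lemma indL2_zero (E : Set (Rn n)) : indL2 E (0 : L2 n) = 0 := by
  by_cases hE : MeasurableSet E
  · exact (indL2CLM E hE).map_zero
  · exact indL2_of_not_measurableSet hE 0

lemma indL2_smul_real (E : Set (Rn n)) (c : ℝ) (u : L2 n) : indL2 E (c • u) = c • indL2 E u := by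
  by_cases hE : MeasurableSet E
  · exact (indL2CLM E hE).map_smul_of_tower c u
  · simp [indL2_of_not_measurableSet hE]

lemma enorm_indL2_toL2_sq {E : Set (Rn n)} (hE : MeasurableSet E) {g : Rn n → ℂ}
    (hg : MemLp g 2 volume) : ‖indL2 E (toL2 g)‖ₑ ^ 2 = ∫⁻ y in E, ‖g y‖ₑ ^ 2 := by
  rw [enorm_indL2_sq hE, toL2, dif_pos hg]
  refine lintegral_congr_ae (ae_restrict_of_ae ?_)
  filter_upwards [hg.coeFn_toLp] with y hy
  rw [hy]

lemma CcOnPos.memLp {f : ℝ → Rn n → ℂ} (hf : CcOnPos n f) (s : ℝ) : MemLp (f s) 2 volume := by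
  have hs : Topology.IsClosedEmbedding (Prod.mk s : Rn n → ℝ × Rn n) :=
    ⟨isEmbedding_prodMkRight s, by
      rw [show range (Prod.mk s) = {s} ×ˢ (univ : Set (Rn n)) by simp [singleton_prod]]
      exact isClosed_singleton.prod isClosed_univ⟩
  exact (hf.1.comp (Continuous.prodMk_right s)).memLp_of_hasCompactSupport
    (hf.2.1.comp_isClosedEmbedding hs)

lemma measurable_setLIntegral_ball {F : ℝ → Rn n → ℝ≥0∞} (hF : Measurable (Function.uncurry F))
    {R : ℝ → ℝ} (hR : Measurable R) (x : Rn n) :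
    Measurable fun s => ∫⁻ y in ball x (R s), F s y := by
  have hS : MeasurableSet {p : ℝ × Rn n | dist p.2 x < R p.1} :=
    measurableSet_lt (measurable_snd.dist measurable_const) (hR.comp measurable_fst)
  simp_rw [← lintegral_indicator measurableSet_ball]
  exact Measurable.lintegral_prod_right (hF.indicator hS)

lemma CcOnPos.measurable_enorm_indL2_ball {f : ℝ → Rn n → ℂ} (hf : CcOnPos n f) (x : Rn n)
    {R : ℝ → ℝ} (hR : Measurable R) :
    Measurable fun s => ‖indL2 (ball x (R s)) (toL2 (f s))‖ₑ := by
  have h : (fun s => ‖indL2 (ball x (R s)) (toL2 (f s))‖ₑ)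
      = fun s => (∫⁻ y in ball x (R s), ‖f s y‖ₑ ^ 2) ^ (2⁻¹ : ℝ) := by
    ext s
    rw [← enorm_indL2_toL2_sq measurableSet_ball (hf.memLp s)]
    exact (ENNReal.pow_rpow_inv_natCast two_ne_zero _).symm
  rw [h]
  refine (measurable_setLIntegral_ball ?_ hR x).pow_const _
  exact (hf.1.measurable.enorm).pow_const 2

lemma setDist_nonneg (E F : Set (Rn n)) : 0 ≤ setDist E F :=
  Real.sInf_nonneg (by rintro _ ⟨a, -, b, -, rfl⟩; exact dist_nonneg)

lemma le_setDist {E F : Set (Rn n)} (hE : E.Nonempty) (hF : F.Nonempty) {d : ℝ}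
    (h : ∀ a ∈ E, ∀ b ∈ F, d ≤ dist a b) : d ≤ setDist E F :=
  le_csInf (hE.image2 hF) (by rintro _ ⟨a, ha, b, hb, rfl⟩; exact h a ha b hb)

lemma measurableSet_Cann (j : ℕ) (x : Rn n) (r : ℝ) : MeasurableSet (Cann j x r) := by
  unfold Cann
  split_ifs
  exacts [measurableSet_ball, measurableSet_ball.diff measurableSet_ball]

lemma Cann_subset_ball (j : ℕ) (x : Rn n) (r : ℝ) : Cann j x r ⊆ ball x (2 ^ j * r) := by
  unfold Cann
  split_ifs with hj
  · simp [hj]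
  · exact sdiff_subset

lemma le_dist_of_mem_ball_of_mem_Cann {i : ℕ} {x a b : Rn n} {r : ℝ} (ha : a ∈ ball x r)
    (hb : b ∈ Cann (i + 1) x (4 * r)) : 2 ^ (i + 1) * r ≤ dist a b := by
  simp only [Cann, Nat.add_one_ne_zero, if_false, add_tsub_cancel_right, mem_sdiff, mem_ball,
    not_lt] at hb
  rw [mem_ball] at ha
  have hr : 0 < r := dist_nonneg.trans_lt ha
  have h2 : r ≤ 2 ^ i * r := le_mul_of_one_le_left hr.le (one_le_pow₀ one_le_two)
  rw [pow_succ] at hb ⊢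
  linarith [dist_triangle b a x, dist_comm a b]

lemma Cann_subset_ball_of_le {m k : ℕ} (j : ℕ) (x : Rn n) {t s : ℝ} (ht : 0 ≤ t) (hs : 0 ≤ s)
    (hts : t ≤ 2 ^ (k + 1) * s) :
    Cann j x (4 * t ^ (m:ℝ)⁻¹) ⊆ ball x (2 ^ ((j:ℝ) + k / m + 3) * s ^ (m:ℝ)⁻¹) := by
  refine (Cann_subset_ball j x _).trans (ball_subset_ball ?_)
  have hm : (m:ℝ)⁻¹ ≤ 1 := by
    rcases Nat.eq_zero_or_pos m with rfl | hm
    · simp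
    · exact inv_le_one_of_one_le₀ (by exact_mod_cast hm)
  have hexp : (2:ℝ) ^ (((k + 1 : ℕ) : ℝ) * (m:ℝ)⁻¹) ≤ 2 ^ ((k:ℝ) / m + 1) := by
    apply Real.rpow_le_rpow_of_exponent_le one_le_two
    push_cast
    rw [div_eq_mul_inv]
    nlinarith [inv_nonneg.2 (Nat.cast_nonneg (α := ℝ) m)]
  calc (2:ℝ) ^ j * (4 * t ^ (m:ℝ)⁻¹) ≤ 2 ^ j * (4 * (2 ^ (k + 1) * s) ^ (m:ℝ)⁻¹) := by gcongr
    _ = 2 ^ j * 4 * 2 ^ (((k + 1 : ℕ) : ℝ) * (m:ℝ)⁻¹) * s ^ (m:ℝ)⁻¹ := by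
        rw [Real.mul_rpow (by positivity) hs, ← Real.rpow_natCast (2:ℝ) (k + 1),
          ← Real.rpow_mul zero_le_two]
        ring
    _ ≤ 2 ^ j * 4 * 2 ^ ((k:ℝ) / m + 1) * s ^ (m:ℝ)⁻¹ := by gcongr
    _ = 2 ^ ((j:ℝ) + k / m + 3) * s ^ (m:ℝ)⁻¹ := by
        rw [show (j:ℝ) + k / m + 3 = j + 2 + (k / m + 1) by ring,
          Real.rpow_add two_pos ((j:ℝ) + 2), Real.rpow_add two_pos (j:ℝ), Real.rpow_natCast,
          Real.rpow_two]
        ring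

namespace OffDiag

variable {T : ℝ → (L2 n →L[ℂ] L2 n)} {M C₀ : ℝ} {m : ℕ}

lemma mono_const (hod : OffDiag n T M m C₀) {C₁ : ℝ} (h : C₀ ≤ C₁) : OffDiag n T M m C₁ :=
  fun E F hE hF t ht u => (hod E F hE hF t ht u).trans <| by
    have := setDist_nonneg E F
    gcongr

lemma norm_indL2_le_of_le_dist (hod : OffDiag n T M m C₀) (hC₀ : 0 ≤ C₀) (hM : 0 ≤ M)
    {E F : Set (Rn n)} (hE : MeasurableSet E) (hF : MeasurableSet F) {t d : ℝ} (ht : 0 < t)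
    (hd : 0 ≤ d) (hEF : ∀ a ∈ E, ∀ b ∈ F, d ≤ dist a b) (u : L2 n) :
    ‖indL2 E (T t (indL2 F u))‖ ≤ C₀ * (1 + d ^ (m:ℝ) / t) ^ (-M) * ‖indL2 F u‖ := by
  rcases E.eq_empty_or_nonempty with rfl | hEne
  · rw [indL2_empty, norm_zero]
    positivity
  rcases F.eq_empty_or_nonempty with rfl | hFne
  · rw [indL2_empty, map_zero, indL2_zero, norm_zero]
    positivity
  refine (hod E F hE hF t ht u).trans ?_
  have hdist : d ≤ setDist E F := le_setDist hEne hFne hEF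
  refine mul_le_mul_of_nonneg_right (mul_le_mul_of_nonneg_left ?_ hC₀) (norm_nonneg _)
  exact Real.rpow_le_rpow_of_nonpos
    (add_pos_of_pos_of_nonneg one_pos (div_nonneg (Real.rpow_nonneg hd _) ht.le)) (by gcongr)
    (neg_nonpos.2 hM)

lemma norm_indL2_ball_Cann_le (hod : OffDiag n T M m C₀) (hC₀ : 0 ≤ C₀) (hM : 0 ≤ M)
    (x : Rn n) (j : ℕ) {r τ : ℝ} (hr : 0 ≤ r) (hτ : 0 < τ) (hτr : τ ≤ r ^ m) (u : L2 n) :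
    ‖indL2 (ball x r) (T τ (indL2 (Cann j x (4 * r)) u))‖
      ≤ C₀ * 2 ^ (-((j:ℝ) * m * M)) * ‖indL2 (Cann j x (4 * r)) u‖ := by
  cases j with
  | zero =>
    refine (hod.norm_indL2_le_of_le_dist hC₀ hM measurableSet_ball (measurableSet_Cann _ _ _) hτ
      le_rfl (fun _ _ _ _ => dist_nonneg) u).trans ?_
    refine mul_le_mul_of_nonneg_right (mul_le_mul_of_nonneg_left ?_ hC₀) (norm_nonneg _)
    rw [Nat.cast_zero, zero_mul, zero_mul, neg_zero, Real.rpow_zero]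
    exact Real.rpow_le_one_of_one_le_of_nonpos
      (le_add_of_nonneg_right (div_nonneg (Real.rpow_nonneg le_rfl _) hτ.le)) (neg_nonpos.2 hM)
  | succ i =>
    refine (hod.norm_indL2_le_of_le_dist hC₀ hM measurableSet_ball (measurableSet_Cann _ _ _) hτ
      (by positivity) (fun _ ha _ hb => le_dist_of_mem_ball_of_mem_Cann ha hb) u).trans ?_
    refine mul_le_mul_of_nonneg_right (mul_le_mul_of_nonneg_left ?_ hC₀) (norm_nonneg _)
    have hsep : (2:ℝ) ^ ((i + 1) * m) ≤ 1 + (2 ^ (i + 1) * r) ^ (m:ℝ) / τ := by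
      rw [Real.rpow_natCast, mul_pow, ← pow_mul]
      have : (2:ℝ) ^ ((i + 1) * m) ≤ 2 ^ ((i + 1) * m) * r ^ m / τ := by
        rw [le_div_iff₀ hτ]
        gcongr
      linarith
    calc (1 + (2 ^ (i + 1) * r) ^ (m:ℝ) / τ) ^ (-M) ≤ ((2:ℝ) ^ ((i + 1) * m)) ^ (-M) :=
          Real.rpow_le_rpow_of_nonpos (by positivity) hsep (neg_nonpos.2 hM)
      _ = 2 ^ (-(((i + 1 : ℕ) : ℝ) * m * M)) := by
          rw [← Real.rpow_natCast, ← Real.rpow_mul zero_le_two]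
          push_cast
          ring_nf

end OffDiag

lemma norm_indL2_ball_Q_le {Q : ℝ → (L2 n →L[ℂ] L2 n)} {M C₀ : ℝ} {m : ℕ}
    (hod : OffDiag n (fun t => t • Q t) M m C₀) (hm : m ≠ 0) (hC₀ : 0 ≤ C₀) (hM : 0 ≤ M)
    (x : Rn n) (j : ℕ) {k : ℕ} (hk : 1 ≤ k) {t s : ℝ} (ht : 0 < t)
    (hs : s ∈ Ioo ((2:ℝ) ^ (-(k:ℝ) - 1) * t) ((2:ℝ) ^ (-(k:ℝ)) * t)) (u : L2 n) :
    ‖indL2 (ball x (t ^ (m:ℝ)⁻¹)) (Q (t - s) (indL2 (Cann j x (4 * t ^ (m:ℝ)⁻¹)) u))‖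
      ≤ 2 * C₀ * 2 ^ (-((j:ℝ) * m * M)) / t
        * ‖indL2 (ball x (2 ^ ((j:ℝ) + k / m + 3) * s ^ (m:ℝ)⁻¹)) u‖ := by
  have hs0 : 0 < s := lt_trans (by positivity) hs.1
  have hst : s ≤ t / 2 := by
    have : (2:ℝ) ^ (-(k:ℝ)) ≤ 2 ^ (-1:ℝ) :=
      Real.rpow_le_rpow_of_exponent_le one_le_two (by simp [hk])
    rw [Real.rpow_neg_one] at this
    nlinarith [hs.2]
  have hts : t ≤ 2 ^ (k + 1) * s := by
    have h : (2:ℝ) ^ (k + 1) * 2 ^ (-(k:ℝ) - 1) = 1 := by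
      rw [← Real.rpow_natCast, ← Real.rpow_add two_pos]
      norm_num
    calc t = 2 ^ (k + 1) * (2 ^ (-(k:ℝ) - 1) * t) := by rw [← mul_assoc, h, one_mul]
      _ ≤ 2 ^ (k + 1) * s := by gcongr; exact hs.1.le
  have hτ : 0 < t - s := by linarith
  have hoff := hod.norm_indL2_ball_Cann_le hC₀ hM x j (r := t ^ (m:ℝ)⁻¹)
    (Real.rpow_nonneg ht.le _) hτ (by rw [Real.rpow_inv_natCast_pow ht.le hm]; linarith) u
  simp only [_root_.smul_apply, indL2_smul_real, norm_smul, Real.norm_eq_abs,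
    abs_of_pos hτ] at hoff
  have hsub := norm_indL2_le_of_subset (measurableSet_Cann _ _ _) measurableSet_ball
    (Cann_subset_ball_of_le (m := m) j x ht.le hs0.le hts) u
  set X := ‖indL2 (ball x (t ^ (m:ℝ)⁻¹)) (Q (t - s) (indL2 (Cann j x (4 * t ^ (m:ℝ)⁻¹)) u))‖
  rw [div_mul_eq_mul_div, le_div_iff₀ ht]
  have hX : 0 ≤ X := norm_nonneg _
  calc X * t ≤ 2 * ((t - s) * X) := by nlinarith [mul_nonneg hX (by linarith : 0 ≤ t - 2 * s)]
    _ ≤ 2 * (C₀ * 2 ^ (-((j:ℝ) * m * M)) * ‖indL2 (Cann j x (4 * t ^ (m:ℝ)⁻¹)) u‖) := by gcongr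
    _ ≤ _ := by
        rw [← mul_assoc, mul_assoc 2 C₀]
        gcongr

lemma lintegral_ball_integral_Q_sq_le {Q : ℝ → (L2 n →L[ℂ] L2 n)} {M C₀ : ℝ} {m : ℕ}
    (hod : OffDiag n (fun t => t • Q t) M m C₀) (hm : m ≠ 0) (hC₀ : 0 ≤ C₀) (hM : 0 ≤ M)
    (x : Rn n) (j : ℕ) {k : ℕ} (hk : 1 ≤ k) {u : ℝ → L2 n}
    (hu : Measurable fun s => ‖indL2 (ball x (2 ^ ((j:ℝ) + k / m + 3) * s ^ (m:ℝ)⁻¹)) (u s)‖ₑ)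
    (w : ℝ) {t : ℝ} (ht : 0 < t) :
    (∫⁻ y in ball x (t ^ (m:ℝ)⁻¹),
        ‖(∫ s in Ioo ((2:ℝ) ^ (-(k:ℝ) - 1) * t) ((2:ℝ) ^ (-(k:ℝ)) * t),
          Q (t - s) (indL2 (Cann j x (4 * t ^ (m:ℝ)⁻¹)) (u s))) y‖ₑ ^ 2)
        * ENNReal.ofReal (t ^ w)
      ≤ ENNReal.ofReal ((2 * C₀ * 2 ^ (-((j:ℝ) * m * M))) ^ 2 * (2 ^ (-(k:ℝ)) - 2 ^ (-(k:ℝ) - 1)))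
        * ((∫⁻ s in Ioo ((2:ℝ) ^ (-(k:ℝ) - 1) * t) ((2:ℝ) ^ (-(k:ℝ)) * t),
            ‖indL2 (ball x (2 ^ ((j:ℝ) + k / m + 3) * s ^ (m:ℝ)⁻¹)) (u s)‖ₑ ^ 2)
          * ENNReal.ofReal (t ^ (w - 1))) := by
  set c := 2 * C₀ * 2 ^ (-((j:ℝ) * m * M))
  set I := Ioo ((2:ℝ) ^ (-(k:ℝ) - 1) * t) ((2:ℝ) ^ (-(k:ℝ)) * t)
  have hball : MeasurableSet (ball x (t ^ (m:ℝ)⁻¹)) := measurableSet_ball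
  have hwindow := (indL2CLM _ hball).sq_enorm_apply_integral_le (μ := volume.restrict I)
    (G := fun s => Q (t - s) (indL2 (Cann j x (4 * t ^ (m:ℝ)⁻¹)) (u s)))
    (c := ENNReal.ofReal (c / t)) hu.aemeasurable
    ((ae_restrict_iff' measurableSet_Ioo).2 (.of_forall fun s hs => by
      rw [indL2CLM_apply, ← ofReal_norm, ← ofReal_norm, ← ENNReal.ofReal_mul (by positivity)]
      exact ENNReal.ofReal_le_ofReal (norm_indL2_ball_Q_le hod hm hC₀ hM x j hk ht hs _)))
  rw [indL2CLM_apply, Measure.restrict_apply_univ, Real.volume_Ioo, ← sub_mul] at hwindow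
  have hpos : 0 ≤ (2:ℝ) ^ (-(k:ℝ)) - 2 ^ (-(k:ℝ) - 1) :=
    sub_nonneg.2 (Real.rpow_le_rpow_of_exponent_le one_le_two (by linarith))
  have hcoef : (c / t) ^ 2 * ((2 ^ (-(k:ℝ)) - 2 ^ (-(k:ℝ) - 1)) * t) * t ^ w
      = c ^ 2 * (2 ^ (-(k:ℝ)) - 2 ^ (-(k:ℝ) - 1)) * t ^ (w - 1) := by
    rw [Real.rpow_sub ht, Real.rpow_one]
    field_simp
  rw [← enorm_indL2_sq hball]
  calc _ ≤ ENNReal.ofReal (c / t) ^ 2 * ENNReal.ofReal ((2 ^ (-(k:ℝ)) - 2 ^ (-(k:ℝ) - 1)) * t)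
          * (∫⁻ s in I, ‖indL2 (ball x (2 ^ ((j:ℝ) + k / m + 3) * s ^ (m:ℝ)⁻¹)) (u s)‖ₑ ^ 2)
          * ENNReal.ofReal (t ^ w) := by gcongr
    _ = ENNReal.ofReal ((c / t) ^ 2 * ((2 ^ (-(k:ℝ)) - 2 ^ (-(k:ℝ) - 1)) * t) * t ^ w)
          * ∫⁻ s in I, ‖indL2 (ball x (2 ^ ((j:ℝ) + k / m + 3) * s ^ (m:ℝ)⁻¹)) (u s)‖ₑ ^ 2 := by
          rw [← ENNReal.ofReal_pow (by positivity),
            ENNReal.ofReal_mul (p := (c / t) ^ 2 * _) (by positivity),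
            ENNReal.ofReal_mul (p := (c / t) ^ 2) (by positivity)]
          ring
    _ = _ := by
          rw [hcoef, ENNReal.ofReal_mul (by positivity)]
          ring

end

lemma Ikj_constant_eq (C w M : ℝ) (j m k : ℕ) :
    (2 * C * 2 ^ (-((j:ℝ) * m * M))) ^ 2 * (2 ^ (-(k:ℝ)) - 2 ^ (-(k:ℝ) - 1))
        * ((((2:ℝ) ^ (-(k:ℝ)))⁻¹ ^ (w - 1) + ((2:ℝ) ^ (-(k:ℝ) - 1))⁻¹ ^ (w - 1))
          * (((2:ℝ) ^ (-(k:ℝ) - 1))⁻¹ - ((2:ℝ) ^ (-(k:ℝ)))⁻¹))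
      = 2 * C ^ 2 * (1 + 2 ^ (w - 1)) * 2 ^ (-(k:ℝ) * (1 - w)) * 2 ^ (-2 * (j:ℝ) * m * M) := by
  set p := (2:ℝ) ^ (-(k:ℝ)) with hp_def
  have hp : 0 < p := by positivity
  have hhalf : (2:ℝ) ^ (-(k:ℝ) - 1) = p / 2 := Real.rpow_sub_one two_ne_zero _
  have hdouble : (2 * p⁻¹) ^ (w - 1) = 2 ^ (w - 1) * p⁻¹ ^ (w - 1) :=
    Real.mul_rpow zero_le_two (inv_nonneg.2 hp.le)
  have hk : p⁻¹ ^ (w - 1) = 2 ^ (-(k:ℝ) * (1 - w)) := by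
    rw [hp_def, Real.rpow_neg zero_le_two (k:ℝ), inv_inv, ← Real.rpow_mul zero_le_two]
    ring_nf
  have hj : ((2:ℝ) ^ (-((j:ℝ) * m * M))) ^ 2 = 2 ^ (-2 * (j:ℝ) * m * M) := by
    rw [← Real.rpow_natCast, ← Real.rpow_mul zero_le_two]
    ring_nf
  rw [hhalf, inv_div, div_eq_mul_inv 2 p, hdouble, ← hk, ← hj]
  field_simp
  ring

theorem Ikj_inner_estimate_general
    (n : ℕ) (m : ℕ) (hm : 1 ≤ m) (β : ℝ)
    (Q : ℝ → (L2 n →L[ℂ] L2 n)) (M C₀ : ℝ) (hM : 0 < M)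
    (hod : OffDiag n (fun t => t • Q t) M m C₀) :
    ∃ C : ℝ, 0 < C ∧ ∀ f : ℝ → Rn n → ℂ, CcOnPos n f → ∀ x : Rn n, ∀ j k : ℕ, 1 ≤ k →
      ∫⁻ t in Ioi (0:ℝ),
          (∫⁻ y in ball x (t ^ ((m:ℝ)⁻¹)),
            (‖(∫ s in Ioo ((2:ℝ) ^ (-(k:ℝ) - 1) * t) ((2:ℝ) ^ (-(k:ℝ)) * t),
                  Q (t - s) (indL2 (Cann j x (4 * t ^ ((m:ℝ)⁻¹))) (toL2 (f s)))) y‖₊ : ℝ≥0∞) ^ 2)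
            * ENNReal.ofReal (t ^ (β - (n:ℝ)/(m:ℝ)))
        ≤ ENNReal.ofReal (C * 2 ^ (-(k:ℝ) * ((n:ℝ)/(m:ℝ) + 1 - β)) * 2 ^ (-2 * (j:ℝ) * (m:ℝ) * M)) *
            ∫⁻ s in Ioi (0:ℝ),
              (‖indL2 (ball x ((2:ℝ) ^ ((j:ℝ) + (k:ℝ)/(m:ℝ) + 3) * s ^ ((m:ℝ)⁻¹)))
                  (toL2 (f s))‖₊ : ℝ≥0∞) ^ 2 * ENNReal.ofReal (s ^ (β - (n:ℝ)/(m:ℝ))) := by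
  set w := β - (n:ℝ) / m
  set C₁ := |C₀| + 1
  have hod₁ : OffDiag n (fun t => t • Q t) M m C₁ := hod.mono_const (by linarith [le_abs_self C₀])
  refine ⟨2 * C₁ ^ 2 * (1 + 2 ^ (w - 1)), by positivity, fun f hf x j k hk => ?_⟩
  have hg := hf.measurable_enorm_indL2_ball x
    (R := fun s => 2 ^ ((j:ℝ) + k / m + 3) * s ^ (m:ℝ)⁻¹) (by fun_prop)
  have hab : (2:ℝ) ^ (-(k:ℝ) - 1) ≤ 2 ^ (-(k:ℝ)) :=
    Real.rpow_le_rpow_of_exponent_le one_le_two (by linarith)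
  simp only [← enorm_eq_nnnorm]
  calc _ ≤ ∫⁻ t in Ioi 0,
          ENNReal.ofReal ((2 * C₁ * 2 ^ (-((j:ℝ) * m * M))) ^ 2 * (2 ^ (-(k:ℝ)) - 2 ^ (-(k:ℝ) - 1)))
          * ((∫⁻ s in Ioo ((2:ℝ) ^ (-(k:ℝ) - 1) * t) ((2:ℝ) ^ (-(k:ℝ)) * t),
              ‖indL2 (ball x (2 ^ ((j:ℝ) + k / m + 3) * s ^ (m:ℝ)⁻¹)) (toL2 (f s))‖ₑ ^ 2)
            * ENNReal.ofReal (t ^ (w - 1))) :=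
        setLIntegral_mono' measurableSet_Ioi fun t ht =>
          lintegral_ball_integral_Q_sq_le hod₁ (by omega) (by positivity) hM.le x j hk
            (u := fun s => toL2 (f s)) hg w ht
    _ ≤ _ := by
        rw [lintegral_const_mul' _ _ ENNReal.ofReal_ne_top]
        refine (mul_le_mul_right (lintegral_Ioi_lintegral_Ioo_mul_rpow_le w (by positivity) hab
          (hg.pow_const 2)) _).trans_eq ?_
        rw [← mul_assoc, ← ENNReal.ofReal_mul (by positivity), Ikj_constant_eq,
          show (n:ℝ) / m + 1 - β = 1 - w by ring]

/-- Pointwise (in `x`) estimate for the pieces `I_{k,j}` in the proof of tent space maximal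
regularity. -/
theorem Ikj_inner_estimate
    (n : ℕ) (hn : 1 ≤ n) (m : ℕ) (hm : 1 ≤ m) (β : ℝ)
    (Q : ℝ → (L2 n →L[ℂ] L2 n)) (M C₀ : ℝ) (hM : 0 < M)
    (hod : OffDiag n (fun t => t • Q t) M m C₀) :
    ∃ C : ℝ, 0 < C ∧ ∀ f : ℝ → Rn n → ℂ, CcOnPos n f → ∀ x : Rn n, ∀ j k : ℕ, 1 ≤ k →
      ∫⁻ t in Ioi (0:ℝ),
          (∫⁻ y in ball x (t ^ ((m:ℝ)⁻¹)),
            (‖(∫ s in Ioo ((2:ℝ) ^ (-(k:ℝ) - 1) * t) ((2:ℝ) ^ (-(k:ℝ)) * t),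
                  Q (t - s) (indL2 (Cann j x (4 * t ^ ((m:ℝ)⁻¹))) (toL2 (f s)))) y‖₊ : ℝ≥0∞) ^ 2)
            * ENNReal.ofReal (t ^ (β - (n:ℝ)/(m:ℝ)))
        ≤ ENNReal.ofReal (C * 2 ^ (-(k:ℝ) * ((n:ℝ)/(m:ℝ) + 1 - β)) * 2 ^ (-2 * (j:ℝ) * (m:ℝ) * M)) *
            ∫⁻ s in Ioi (0:ℝ),
              (‖indL2 (ball x ((2:ℝ) ^ ((j:ℝ) + (k:ℝ)/(m:ℝ) + 3) * s ^ ((m:ℝ)⁻¹)))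
                  (toL2 (f s))‖₊ : ℝ≥0∞) ^ 2 * ENNReal.ofReal (s ^ (β - (n:ℝ)/(m:ℝ))) :=
  Ikj_inner_estimate_general n m hm β Q M C₀ hM hod
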